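/- arXiv:2604.09281 — 2 statements merged into one kernel-verified Lean document; each statement's English description precedes it below -/
import Mathlib

section
/- Let d ≥ 1 be an integer, m > max(0,(d-2)/d), and fix η ∈ (0,1). For α ∈ (0,1) set b_α := α/(2+d(m-1)) and Q_α(η) := (1/Γ(1-α)) ∫_η^1 (1-σ^{1/b_α})^{-α} σ^{1-d} dσ. Then Q_α(η) tends to 1/(2+d(m-1)) as α → 1⁻. -/
/-!
Put `c = 2 + d(m - 1) > 0` and `p = c / α`. Writing `σ ^ (1 - d) = σ ^ (2 - d - p) σ ^ (p - 1)`,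
the integrand is `σ ^ (2 - d - p) / p` times the weight `(1 - σ ^ p) ^ (-α) p σ ^ (p - 1)`, which
is the derivative of `-(1 - σ ^ p) ^ (1 - α) / (1 - α)`. Since `1 / Γ(1 - α) = (1 - α) / Γ(2 - α)`
and `Γ(2 - α) → 1`, it suffices to show `(1 - α) ∫ → 1 / c`. For `s ∈ (η, 1)`, on `(s, 1)` the
factor `σ ^ (2 - d - p)` lies between `min` and `max` of `1` and `s ^ (2 - d - p)`, while the
weight integrates to `(1 - s ^ p) ^ (1 - α) / (1 - α)`; on `(η, s]` the integrand is bounded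
uniformly in `α`, so that part is killed by the factor `1 - α`. Letting `α → 1` and then
`s → 1` squeezes the limit to `1 / c`.
-/

open MeasureTheory Set Filter Topology

section

variable {c p q r α s t σ η : ℝ}

lemma rpow_le_max_one_rpow (ht : 0 < t) (htσ : t ≤ σ) (hσ : σ ≤ 1) :
    σ ^ r ≤ max 1 (t ^ r) := by
  rcases le_or_gt 0 r with hr | hr
  · exact le_max_of_le_left (Real.rpow_le_one (ht.trans_le htσ).le hσ hr)
  · exact le_max_of_le_right (Real.rpow_le_rpow_of_nonpos ht htσ hr.le)

lemma min_one_rpow_le_rpow (ht : 0 < t) (htσ : t ≤ σ) (hσ : σ ≤ 1) :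
    min 1 (t ^ r) ≤ σ ^ r := by
  rcases le_or_gt 0 r with hr | hr
  · exact min_le_of_right_le (Real.rpow_le_rpow ht.le htσ hr)
  · exact min_le_of_left_le
      (Real.one_le_rpow_of_pos_of_le_one_of_nonpos (ht.trans_le htσ) hσ hr.le)

lemma one_sub_rpow_pos (hp : 0 < p) (hσ0 : 0 ≤ σ) (hσ1 : σ < 1) : 0 < 1 - σ ^ p :=
  sub_pos.2 (Real.rpow_lt_one hσ0 hσ1 hp)

lemma one_sub_rpow_neg_mul_deriv_nonneg (hp : 0 < p) (hσ0 : 0 ≤ σ) (hσ1 : σ < 1) :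
    0 ≤ (1 - σ ^ p) ^ (-α) * (p * σ ^ (p - 1)) :=
  mul_nonneg (Real.rpow_nonneg (one_sub_rpow_pos hp hσ0 hσ1).le _)
    (mul_nonneg hp.le (Real.rpow_nonneg hσ0 _))

lemma hasDerivAt_neg_one_sub_rpow_rpow_div (hp : 0 < p) (hα : α ≠ 1) (hσ0 : 0 < σ)
    (hσ1 : σ < 1) :
    HasDerivAt (fun x => -(1 - x ^ p) ^ (1 - α) / (1 - α))
      ((1 - σ ^ p) ^ (-α) * (p * σ ^ (p - 1))) σ := by
  have hbase := one_sub_rpow_pos hp hσ0.le hσ1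
  have hinner : HasDerivAt (fun x : ℝ => 1 - x ^ p) (-(p * σ ^ (p - 1))) σ :=
    (Real.hasDerivAt_rpow_const (Or.inl hσ0.ne')).const_sub 1
  have hcomp := ((Real.hasDerivAt_rpow_const (p := 1 - α) (Or.inl hbase.ne')).comp σ
    hinner).neg.div_const (1 - α)
  refine hcomp.congr_deriv ?_
  rw [show (1:ℝ) - α - 1 = -α by ring]
  field_simp [sub_ne_zero.2 (Ne.symm hα)]

-- The antiderivative is continuous up to `σ = 1` because `α < 1`.
lemma integrableOn_Ioo_and_integral_one_sub_rpow_neg_mul_deriv (hp : 0 < p) (hα : α < 1)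
    (hs0 : 0 < s) (hs1 : s < 1) :
    IntegrableOn (fun σ => (1 - σ ^ p) ^ (-α) * (p * σ ^ (p - 1))) (Ioo s 1) ∧
      ∫ σ in Ioo s 1, (1 - σ ^ p) ^ (-α) * (p * σ ^ (p - 1)) =
        (1 - s ^ p) ^ (1 - α) / (1 - α) := by
  have h1α : 0 < 1 - α := sub_pos.2 hα
  have hcont : ContinuousOn (fun x => -(1 - x ^ p) ^ (1 - α) / (1 - α)) (Icc s 1) :=
    ((continuousOn_const.sub (continuousOn_id.rpow_const fun x hx =>
      Or.inl (hs0.trans_le hx.1).ne')).rpow_const fun _ _ => Or.inr h1α.le).neg.div_const _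
  have hderiv : ∀ σ ∈ Ioo s 1, HasDerivAt (fun x => -(1 - x ^ p) ^ (1 - α) / (1 - α))
      ((1 - σ ^ p) ^ (-α) * (p * σ ^ (p - 1))) σ := fun σ hσ =>
    hasDerivAt_neg_one_sub_rpow_rpow_div hp hα.ne (hs0.trans hσ.1) hσ.2
  have hIoc := intervalIntegral.integrableOn_deriv_of_nonneg hcont hderiv fun σ hσ =>
    one_sub_rpow_neg_mul_deriv_nonneg hp (hs0.trans hσ.1).le hσ.2
  refine ⟨hIoc.mono_set Ioo_subset_Ioc_self, ?_⟩
  have hFTC := intervalIntegral.integral_eq_sub_of_hasDerivAt_of_le hs1.le hcont hderiv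
    ((intervalIntegrable_iff_integrableOn_Ioc_of_le hs1.le).2 hIoc)
  rw [intervalIntegral.integral_of_le hs1.le, integral_Ioc_eq_integral_Ioo] at hFTC
  rw [hFTC, Real.one_rpow, sub_self, Real.zero_rpow h1α.ne']
  ring

lemma one_sub_rpow_neg_mul_rpow_eq (hp : p ≠ 0) (hσ : 0 < σ) :
    (1 - σ ^ p) ^ (-α) * σ ^ q =
      σ ^ (q + 1 - p) / p * ((1 - σ ^ p) ^ (-α) * (p * σ ^ (p - 1))) := by
  have hsplit : σ ^ q = σ ^ (q + 1 - p) * σ ^ (p - 1) := by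
    rw [← Real.rpow_add hσ]; ring_nf
  rw [hsplit]
  field_simp

lemma one_sub_rpow_neg_mul_rpow_mem_Icc (hp : 0 < p) (hs0 : 0 < s) (hσ : σ ∈ Ioo s 1) :
    (1 - σ ^ p) ^ (-α) * σ ^ q ∈
      Icc (min 1 (s ^ (q + 1 - p)) / p * ((1 - σ ^ p) ^ (-α) * (p * σ ^ (p - 1))))
        (max 1 (s ^ (q + 1 - p)) / p * ((1 - σ ^ p) ^ (-α) * (p * σ ^ (p - 1)))) := by
  have hσ0 : 0 < σ := hs0.trans hσ.1
  have hD := one_sub_rpow_neg_mul_deriv_nonneg (α := α) hp hσ0.le hσ.2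
  rw [one_sub_rpow_neg_mul_rpow_eq hp.ne' hσ0]
  constructor
  · gcongr
    exact min_one_rpow_le_rpow hs0 hσ.1.le hσ.2.le
  · gcongr
    exact rpow_le_max_one_rpow hs0 hσ.1.le hσ.2.le

lemma integrableOn_Ioo_one_sub_rpow_neg_mul_rpow (hp : 0 < p) (hα : α < 1) (ht0 : 0 < t)
    (ht1 : t < 1) :
    IntegrableOn (fun σ => (1 - σ ^ p) ^ (-α) * σ ^ q) (Ioo t 1) := by
  have hpos : ∀ x ∈ Ioo t 1, 0 < x := fun x hx => ht0.trans hx.1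
  have hmeas : AEStronglyMeasurable (fun σ => (1 - σ ^ p) ^ (-α) * σ ^ q)
      (volume.restrict (Ioo t 1)) :=
    (((continuousOn_const.sub (continuousOn_id.rpow_const fun x hx =>
      Or.inl (hpos x hx).ne')).rpow_const fun x hx =>
        Or.inl (one_sub_rpow_pos hp (hpos x hx).le hx.2).ne').mul
      (continuousOn_id.rpow_const fun x hx => Or.inl (hpos x hx).ne')).aestronglyMeasurable
      measurableSet_Ioo
  refine ((integrableOn_Ioo_and_integral_one_sub_rpow_neg_mul_deriv hp hα ht0 ht1).1.const_mul
    (max 1 (t ^ (q + 1 - p)) / p)).mono' hmeas ?_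
  rw [ae_restrict_iff' measurableSet_Ioo]
  refine ae_of_all _ fun σ hσ => ?_
  have hbound := one_sub_rpow_neg_mul_rpow_mem_Icc (α := α) (q := q) hp ht0 hσ
  rw [Real.norm_of_nonneg ((mul_nonneg (by positivity)
    (one_sub_rpow_neg_mul_deriv_nonneg hp (hpos σ hσ).le hσ.2)).trans hbound.1)]
  exact hbound.2

lemma integral_Ioo_one_sub_rpow_neg_mul_rpow_mem_Icc (hp : 0 < p) (hα : α < 1) (hs0 : 0 < s)
    (hs1 : s < 1) :
    ∫ σ in Ioo s 1, (1 - σ ^ p) ^ (-α) * σ ^ q ∈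
      Icc (min 1 (s ^ (q + 1 - p)) / p * ((1 - s ^ p) ^ (1 - α) / (1 - α)))
        (max 1 (s ^ (q + 1 - p)) / p * ((1 - s ^ p) ^ (1 - α) / (1 - α))) := by
  obtain ⟨hD, hDint⟩ := integrableOn_Ioo_and_integral_one_sub_rpow_neg_mul_deriv hp hα hs0 hs1
  have hg := integrableOn_Ioo_one_sub_rpow_neg_mul_rpow (q := q) hp hα hs0 hs1
  rw [← hDint, ← integral_const_mul, ← integral_const_mul]
  exact ⟨setIntegral_mono_on (hD.const_mul _) hg measurableSet_Ioo fun σ hσ =>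
      (one_sub_rpow_neg_mul_rpow_mem_Icc hp hs0 hσ).1,
    setIntegral_mono_on hg (hD.const_mul _) measurableSet_Ioo fun σ hσ =>
      (one_sub_rpow_neg_mul_rpow_mem_Icc hp hs0 hσ).2⟩

lemma one_sub_rpow_neg_mul_rpow_le_of_mem_Ioc (hp : 0 < p) (hη : 0 < η) (hs1 : s < 1)
    (hσ : σ ∈ Ioc η s) :
    (1 - σ ^ p) ^ (-α) * σ ^ q ≤ max 1 ((1 - s ^ p) ^ (-α)) * max 1 (η ^ q) := by
  have hσ0 : 0 < σ := hη.trans hσ.1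
  have hσs : σ ^ p ≤ s ^ p := Real.rpow_le_rpow hσ0.le hσ.2 hp.le
  refine mul_le_mul ?_ (rpow_le_max_one_rpow hη hσ.1.le (hσ.2.trans hs1.le))
    (Real.rpow_nonneg hσ0.le _) (zero_le_one.trans (le_max_left _ _))
  refine rpow_le_max_one_rpow (one_sub_rpow_pos hp (hη.le.trans (hσ.1.le.trans hσ.2)) hs1)
    (by linarith) ?_
  linarith [Real.rpow_nonneg hσ0.le p]

lemma one_sub_mul_integral_Ioo_mem_Icc (hp : 0 < p) (hα : α < 1) (hη : 0 < η) (hηs : η < s)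
    (hs1 : s < 1) :
    (1 - α) * ∫ σ in Ioo η 1, (1 - σ ^ p) ^ (-α) * σ ^ q ∈
      Icc (min 1 (s ^ (q + 1 - p)) / p * (1 - s ^ p) ^ (1 - α))
        ((1 - α) * ((s - η) * (max 1 ((1 - s ^ p) ^ (-α)) * max 1 (η ^ q))) +
          max 1 (s ^ (q + 1 - p)) / p * (1 - s ^ p) ^ (1 - α)) := by
  have h1α : 0 < 1 - α := sub_pos.2 hα
  have hg := integrableOn_Ioo_one_sub_rpow_neg_mul_rpow (q := q) hp hα hη (hηs.trans hs1)
  have hsplit : Ioc η s ∪ Ioo s 1 = Ioo η 1 := Ioc_union_Ioo_eq_Ioo hηs.le hs1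
  rw [← hsplit, setIntegral_union (Ioc_disjoint_Ioi_same.mono_right Ioo_subset_Ioi_self)
    measurableSet_Ioo (hg.mono_set (hsplit ▸ subset_union_left))
    (hg.mono_set (hsplit ▸ subset_union_right))]
  have htail_nonneg : 0 ≤ ∫ σ in Ioc η s, (1 - σ ^ p) ^ (-α) * σ ^ q :=
    setIntegral_nonneg measurableSet_Ioc fun σ hσ =>
      have hσ0 : 0 < σ := hη.trans hσ.1
      mul_nonneg (Real.rpow_nonneg (one_sub_rpow_pos hp hσ0.le (hσ.2.trans_lt hs1)).le _)
        (Real.rpow_nonneg hσ0.le _)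
  have htail_le : ∫ σ in Ioc η s, (1 - σ ^ p) ^ (-α) * σ ^ q ≤
      (s - η) * (max 1 ((1 - s ^ p) ^ (-α)) * max 1 (η ^ q)) := by
    refine (setIntegral_mono_on (hg.mono_set (hsplit ▸ subset_union_left))
      (integrableOn_const measure_Ioc_lt_top.ne) measurableSet_Ioc fun σ hσ =>
        one_sub_rpow_neg_mul_rpow_le_of_mem_Ioc hp hη hs1 hσ).trans_eq ?_
    rw [setIntegral_const, Real.volume_real_Ioc_of_le hηs.le, smul_eq_mul]
  obtain ⟨hmain_ge, hmain_le⟩ := integral_Ioo_one_sub_rpow_neg_mul_rpow_mem_Icc (q := q) hp hα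
    (hη.trans hηs) hs1
  have hcancel (K : ℝ) : (1 - α) * (K * ((1 - s ^ p) ^ (1 - α) / (1 - α))) =
      K * (1 - s ^ p) ^ (1 - α) := by
    field_simp
  have hmain_ge' := mul_le_mul_of_nonneg_left hmain_ge h1α.le
  have hmain_le' := mul_le_mul_of_nonneg_left hmain_le h1α.le
  rw [hcancel] at hmain_ge' hmain_le'
  rw [mul_add]
  constructor
  · linarith [mul_nonneg h1α.le htail_nonneg]
  · linarith [mul_le_mul_of_nonneg_left htail_le h1α.le]

lemma tendsto_kernel_bounds (hc : 0 < c) (hs0 : 0 < s) (hs1 : s < 1) :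
    Tendsto (fun α => min 1 (s ^ (q + 1 - c / α)) / (c / α) * (1 - s ^ (c / α)) ^ (1 - α))
        (𝓝 1) (𝓝 (min 1 (s ^ (q + 1 - c)) / c)) ∧
      Tendsto (fun α => (1 - α) * ((s - η) * (max 1 ((1 - s ^ (c / α)) ^ (-α)) *
          max 1 (η ^ q))) + max 1 (s ^ (q + 1 - c / α)) / (c / α) * (1 - s ^ (c / α)) ^ (1 - α))
        (𝓝 1) (𝓝 (max 1 (s ^ (q + 1 - c)) / c)) := by
  have hp : Tendsto (fun α : ℝ => c / α) (𝓝 1) (𝓝 (c / 1)) :=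
    tendsto_const_nhds.div tendsto_id one_ne_zero
  rw [div_one] at hp
  have hr : Tendsto (fun α : ℝ => s ^ (q + 1 - c / α)) (𝓝 1) (𝓝 (s ^ (q + 1 - c))) :=
    tendsto_const_nhds.rpow (tendsto_const_nhds.sub hp) (Or.inl hs0.ne')
  have hb : Tendsto (fun α => 1 - s ^ (c / α)) (𝓝 1) (𝓝 (1 - s ^ c)) :=
    tendsto_const_nhds.sub (tendsto_const_nhds.rpow hp (Or.inl hs0.ne'))
  have hb0 : 1 - s ^ c ≠ 0 := (one_sub_rpow_pos hc hs0.le hs1).ne'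
  have hb1 : Tendsto (fun α : ℝ => (1 - s ^ (c / α)) ^ (1 - α)) (𝓝 1) (𝓝 1) := by
    simpa using hb.rpow ((tendsto_const_nhds (x := (1 : ℝ))).sub tendsto_id) (Or.inl hb0)
  have hbα : Tendsto (fun α : ℝ => (1 - s ^ (c / α)) ^ (-α)) (𝓝 1) (𝓝 ((1 - s ^ c)⁻¹)) := by
    simpa [Real.rpow_neg_one] using hb.rpow tendsto_id.neg (Or.inl hb0)
  constructor
  · simpa using (((tendsto_const_nhds (x := (1 : ℝ))).min hr).div hp hc.ne').mul hb1
  · simpa using (((tendsto_const_nhds (x := (1 : ℝ))).sub tendsto_id).mul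
      ((tendsto_const_nhds (x := s - η)).mul (((tendsto_const_nhds (x := (1 : ℝ))).max hbα).mul
        (tendsto_const_nhds (x := max 1 (η ^ q)))))).add
      ((((tendsto_const_nhds (x := (1 : ℝ))).max hr).div hp hc.ne').mul hb1)

theorem tendsto_one_sub_mul_integral_Ioo (q : ℝ) (hc : 0 < c) (hη0 : 0 < η) (hη1 : η < 1) :
    Tendsto (fun α => (1 - α) * ∫ σ in Ioo η 1, (1 - σ ^ (c / α)) ^ (-α) * σ ^ q)
      (𝓝[<] 1) (𝓝 (1 / c)) := by
  have hα : ∀ᶠ α in 𝓝[<] (1 : ℝ), α ∈ Ioo 0 1 := Ioo_mem_nhdsLT one_pos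
  have hbounds (α : ℝ) (hα : α ∈ Ioo 0 1) {s : ℝ} (hs : s ∈ Ioo η 1) :=
    one_sub_mul_integral_Ioo_mem_Icc (q := q) (div_pos hc hα.1) hα.2 hη0 hs.1 hs.2
  have hpow : Tendsto (fun s : ℝ => s ^ (q + 1 - c)) (𝓝[<] 1) (𝓝 1) := by
    simpa using (Real.continuousAt_rpow_const 1 (q + 1 - c) (Or.inl one_ne_zero)).tendsto.mono_left
      nhdsWithin_le_nhds
  have hs : ∀ᶠ s in 𝓝[<] (1 : ℝ), s ∈ Ioo η 1 := Ioo_mem_nhdsLT hη1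
  refine tendsto_order.2 ⟨fun a ha => ?_, fun b hb => ?_⟩
  · have hnear : ∀ᶠ s in 𝓝[<] (1 : ℝ), a < min 1 (s ^ (q + 1 - c)) / c :=
      ((tendsto_const_nhds.min hpow).div_const c).eventually (lt_mem_nhds (by simpa using ha))
    obtain ⟨s, hs, has⟩ := (hs.and hnear).exists
    filter_upwards [((tendsto_kernel_bounds (η := η) hc (hη0.trans hs.1) hs.2).1.mono_left
      nhdsWithin_le_nhds).eventually (lt_mem_nhds has), hα] with α hlt hα
    exact hlt.trans_le (hbounds α hα hs).1
  · have hnear : ∀ᶠ s in 𝓝[<] (1 : ℝ), max 1 (s ^ (q + 1 - c)) / c < b :=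
      ((tendsto_const_nhds.max hpow).div_const c).eventually (gt_mem_nhds (by simpa using hb))
    obtain ⟨s, hs, hsb⟩ := (hs.and hnear).exists
    filter_upwards [((tendsto_kernel_bounds (η := η) hc (hη0.trans hs.1) hs.2).2.mono_left
      nhdsWithin_le_nhds).eventually (gt_mem_nhds hsb), hα] with α hlt hα
    exact (hbounds α hα hs).2.trans_lt hlt

end

-- For `d = 0` the hypothesis reads `0 < m` (as `x / 0 = 0`), but then `2 + d(m - 1) = 2` anyway.
lemma two_add_mul_sub_one_pos {d : ℕ} {m : ℝ} (hm : ((d : ℝ) - 2) / d < m) :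
    0 < 2 + (d : ℝ) * (m - 1) := by
  rcases d.eq_zero_or_pos with rfl | hd
  · norm_num
  · have := (div_lt_iff₀ (Nat.cast_pos.2 hd)).1 hm
    linarith

lemma tendsto_Gamma_two_sub_nhds_one : Tendsto (fun α => Real.Gamma (2 - α)) (𝓝 1) (𝓝 1) := by
  have hΓ : ContinuousAt Real.Gamma 1 :=
    (Real.differentiableAt_Gamma fun n => by linarith [n.cast_nonneg (α := ℝ)]).continuousAt
  have h2 : Tendsto (fun α : ℝ => 2 - α) (𝓝 1) (𝓝 (2 - 1)) := tendsto_const_nhds.sub tendsto_id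
  rw [show (2 : ℝ) - 1 = 1 by norm_num] at h2
  have := hΓ.tendsto.comp h2
  rwa [Real.Gamma_one] at this

theorem kernel_limit_alpha_to_one_general (d : ℕ) (m : ℝ)
    (hm : m > max 0 (((d:ℝ) - 2) / d))
    (η : ℝ) (hη : η ∈ Set.Ioo (0:ℝ) 1) :
    Filter.Tendsto
      (fun α : ℝ =>
        (1 / Real.Gamma (1 - α)) *
          ∫ σ in Set.Ioo η 1,
            (1 - σ ^ (1 / (α / (2 + (d:ℝ) * (m - 1))))) ^ (-α) * σ ^ (1 - (d:ℝ)))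
      (nhdsWithin 1 (Set.Ioo 0 1))
      (nhds (1 / (2 + (d:ℝ) * (m - 1)))) := by
  have hc := two_add_mul_sub_one_pos ((le_max_right _ _).trans_lt hm)
  have hlim := ((tendsto_one_sub_mul_integral_Ioo (1 - d) hc hη.1 hη.2).mono_left
    (nhdsWithin_mono _ (Ioo_subset_Iio_self (a := 0)))).div
    (tendsto_Gamma_two_sub_nhds_one.mono_left nhdsWithin_le_nhds) one_ne_zero
  rw [div_one] at hlim
  refine hlim.congr' (eventually_nhdsWithin_of_forall fun α hα => ?_)
  dsimp only [Pi.div_apply]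
  rw [one_div_div, show 2 - α = (1 - α) + 1 by ring, Real.Gamma_add_one (sub_pos.2 hα.2).ne',
    mul_div_mul_left _ _ (sub_ne_zero.2 hα.2.ne'), one_div_mul_eq_div]

/-- pointwise convergence of the time-fractional kernel profile to the
classical self-similarity constant `b_{1,m} = 1/(2+d(m-1))` as the Caputo order `α → 1⁻`. -/
theorem kernel_limit_alpha_to_one (d : ℕ) (hd : 1 ≤ d) (m : ℝ)
    (hm : m > max 0 (((d:ℝ) - 2) / d))
    (η : ℝ) (hη : η ∈ Set.Ioo (0:ℝ) 1) :
    Filter.Tendsto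
      (fun α : ℝ =>
        (1 / Real.Gamma (1 - α)) *
          ∫ σ in Set.Ioo η 1,
            (1 - σ ^ (1 / (α / (2 + (d:ℝ) * (m - 1))))) ^ (-α) * σ ^ (1 - (d:ℝ)))
      (nhdsWithin 1 (Set.Ioo 0 1))
      (nhds (1 / (2 + (d:ℝ) * (m - 1)))) :=
  kernel_limit_alpha_to_one_general d m hm η hη
end

section
/- Assume m > 1 and let z₀ > 0. Let U₁, U₂ : [z₀,∞) → [0,∞) be continuous functions such that for each i and every z ≥ z₀ the function ρ ↦ K(z,ρ)·U_i(ρ) is Lebesgue integrable on (z,∞) and U_i(z)^m = ∫_z^∞ K(z,ρ)·U_i(ρ) dρ. If there exists λ > 0 such that λ·U₁(z) ≤ U₂(z) for all z ≥ z₀, then U₁(z) ≤ U₂(z) for all z ≥ z₀. -/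
/-!
The right-hand side of `U ^ m = ∫ K U` is monotone and linear in `U` because `K ≥ 0`, so
`μ U₁ ≤ U₂` gives `μ U₁ ^ m ≤ U₂ ^ m`, i.e. `μ ^ (1/m) U₁ ≤ U₂`. Iterating from `λ` yields
`λ ^ (m⁻ⁿ) U₁ ≤ U₂` for every `n`, and `λ ^ (m⁻ⁿ) → 1` because `m > 1`.
-/

open MeasureTheory Set Filter

/-- The kernel profile `Q(η) = (1/Γ(1-α)) ∫_η^1 (1-σ^{1/b})^{-α} σ^{1-d} dσ` for
`η ∈ (0,1)`; for `η ≥ 1` the interval `(η,1)` is empty, so `Q(η) = 0`. -/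
noncomputable def Qker (d : ℕ) (α b : ℝ) (η : ℝ) : ℝ :=
  (1 / Real.Gamma (1 - α)) *
    ∫ σ in Set.Ioo η 1, (1 - σ ^ (1 / b)) ^ (-α) * σ ^ (1 - (d:ℝ))

/-- The kernel `K(z,ρ) = ρ·Q(z/ρ)`. -/
noncomputable def Kker (d : ℕ) (α b : ℝ) (z ρ : ℝ) : ℝ := ρ * Qker d α b (z / ρ)

lemma Qker_nonneg (d : ℕ) {α b η : ℝ} (hα : α < 1) (hb : 0 < b) (hη : 0 ≤ η) :
    0 ≤ Qker d α b η := by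
  have hΓ : 0 < Real.Gamma (1 - α) := Real.Gamma_pos_of_pos (by linarith)
  refine mul_nonneg (by positivity) (setIntegral_nonneg measurableSet_Ioo fun σ hσ => ?_)
  have hσ0 : 0 < σ := hη.trans_lt hσ.1
  have hσb : σ ^ (1 / b) < 1 := Real.rpow_lt_one hσ0.le hσ.2 (by positivity)
  have : 0 < 1 - σ ^ (1 / b) := by linarith
  positivity

lemma Kker_nonneg (d : ℕ) {α b z ρ : ℝ} (hα : α < 1) (hb : 0 < b) (hz : 0 ≤ z) (hρ : 0 < ρ) :
    0 ≤ Kker d α b z ρ :=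
  mul_nonneg hρ.le (Qker_nonneg d hα hb (by positivity))

lemma rpow_inv_mul_le_of_integral_eq {X : Type*} [MeasurableSpace X] {ν : Measure X}
    {s : Set X} (hs : MeasurableSet s) {k u v : X → ℝ} {m μ x y : ℝ} (hm : 0 < m)
    (hμ : 0 ≤ μ) (hx : 0 ≤ x) (hy : 0 ≤ y) (hk : ∀ ρ ∈ s, 0 ≤ k ρ)
    (hu : IntegrableOn (fun ρ => k ρ * u ρ) s ν) (hv : IntegrableOn (fun ρ => k ρ * v ρ) s ν)
    (huv : ∀ ρ ∈ s, μ * u ρ ≤ v ρ)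
    (hxu : x ^ m = ∫ ρ in s, k ρ * u ρ ∂ν) (hyv : y ^ m = ∫ ρ in s, k ρ * v ρ ∂ν) :
    μ ^ (1 / m) * x ≤ y := by
  have hpow : μ * x ^ m ≤ y ^ m := by
    rw [hxu, hyv, ← integral_const_mul]
    refine setIntegral_mono_on (hu.const_mul μ) hv hs fun ρ hρ => ?_
    calc μ * (k ρ * u ρ) = k ρ * (μ * u ρ) := by ring
      _ ≤ k ρ * v ρ := mul_le_mul_of_nonneg_left (huv ρ hρ) (hk ρ hρ)
  have hlhs : (μ ^ (1 / m) * x) ^ m = μ * x ^ m := by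
    rw [Real.mul_rpow (by positivity) hx, ← Real.rpow_mul hμ, one_div_mul_cancel hm.ne',
      Real.rpow_one]
  exact (Real.rpow_le_rpow_iff (by positivity) hy hm).mp (hlhs ▸ hpow)

lemma le_of_mul_le_of_rpow_inv_improvement {X : Type*} {s : Set X} {f g : X → ℝ} {m lam : ℝ}
    (hm : 1 < m) (hlam : 0 < lam) (hfg : ∀ x ∈ s, lam * f x ≤ g x)
    (improve : ∀ μ : ℝ, 0 < μ → (∀ x ∈ s, μ * f x ≤ g x) → ∀ x ∈ s, μ ^ (1 / m) * f x ≤ g x) :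
    ∀ x ∈ s, f x ≤ g x := by
  have iterate : ∀ n : ℕ, ∀ x ∈ s, lam ^ ((1 / m) ^ n) * f x ≤ g x := by
    intro n
    induction n with
    | zero => simpa using hfg
    | succ n ih =>
      rw [pow_succ]
      simp_rw [Real.rpow_mul hlam.le]
      exact improve _ (Real.rpow_pos_of_pos hlam _) ih
  have hexp : Tendsto (fun n : ℕ => (1 / m) ^ n) atTop (nhds 0) :=
    tendsto_pow_atTop_nhds_zero_of_lt_one (by positivity) ((div_lt_one (by linarith)).mpr hm)
  have hcoef : Tendsto (fun n : ℕ => lam ^ ((1 / m) ^ n)) atTop (nhds 1) := by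
    simpa [Function.comp_def] using (Real.continuousAt_const_rpow hlam.ne').tendsto.comp hexp
  intro x hx
  simpa using le_of_tendsto (hcoef.mul_const (f x)) (Eventually.of_forall fun n => iterate n x hx)

theorem comparison_by_homogeneity_general (d : ℕ) (α m b : ℝ)
    (hα : α ∈ Set.Ioo (0:ℝ) 1)
    (hm : 1 < m)
    (hb : b = α / (2 + (d:ℝ) * (m - 1)))
    (z₀ : ℝ) (hz₀ : 0 < z₀)
    (U₁ U₂ : ℝ → ℝ)
    (hpos₁ : ∀ z, z₀ ≤ z → 0 ≤ U₁ z) (hpos₂ : ∀ z, z₀ ≤ z → 0 ≤ U₂ z)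
    (hsol₁ : ∀ z, z₀ ≤ z →
      MeasureTheory.IntegrableOn (fun ρ => Kker d α b z ρ * U₁ ρ) (Set.Ioi z) ∧
      U₁ z ^ m = ∫ ρ in Set.Ioi z, Kker d α b z ρ * U₁ ρ)
    (hsol₂ : ∀ z, z₀ ≤ z →
      MeasureTheory.IntegrableOn (fun ρ => Kker d α b z ρ * U₂ ρ) (Set.Ioi z) ∧
      U₂ z ^ m = ∫ ρ in Set.Ioi z, Kker d α b z ρ * U₂ ρ)
    (hlam : ∃ lam : ℝ, 0 < lam ∧ ∀ z, z₀ ≤ z → lam * U₁ z ≤ U₂ z) :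
    ∀ z, z₀ ≤ z → U₁ z ≤ U₂ z := by
  obtain ⟨lam, hlam0, hlamle⟩ := hlam
  have hb0 : 0 < b := hb ▸ div_pos hα.1 (by nlinarith)
  refine le_of_mul_le_of_rpow_inv_improvement (s := Ici z₀) hm hlam0 hlamle ?_
  intro μ hμ hμU z (hz : z₀ ≤ z)
  have hK : ∀ ρ ∈ Ioi z, 0 ≤ Kker d α b z ρ := fun ρ (hρ : z < ρ) =>
    Kker_nonneg d hα.2 hb0 (by linarith) (by linarith)
  exact rpow_inv_mul_le_of_integral_eq measurableSet_Ioi (by linarith) hμ.le (hpos₁ z hz)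
    (hpos₂ z hz) hK (hsol₁ z hz).1 (hsol₂ z hz).1 (fun ρ hρ => hμU ρ (hz.trans (le_of_lt hρ)))
    (hsol₁ z hz).2 (hsol₂ z hz).2

/-- comparison by homogeneity in the slow-diffusion range `m > 1`. If two
continuous nonnegative solutions on `[z₀,∞)` satisfy `λ·U₁ ≤ U₂` for some `λ > 0`, then
`U₁ ≤ U₂` on `[z₀,∞)`. -/
theorem comparison_by_homogeneity (d : ℕ) (hd : 1 ≤ d) (α m b : ℝ)
    (hα : α ∈ Set.Ioo (0:ℝ) 1)
    (hm : 1 < m)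
    (hb : b = α / (2 + (d:ℝ) * (m - 1)))
    (z₀ : ℝ) (hz₀ : 0 < z₀)
    (U₁ U₂ : ℝ → ℝ)
    (hc₁ : ContinuousOn U₁ (Set.Ici z₀)) (hc₂ : ContinuousOn U₂ (Set.Ici z₀))
    (hpos₁ : ∀ z, z₀ ≤ z → 0 ≤ U₁ z) (hpos₂ : ∀ z, z₀ ≤ z → 0 ≤ U₂ z)
    (hsol₁ : ∀ z, z₀ ≤ z →
      MeasureTheory.IntegrableOn (fun ρ => Kker d α b z ρ * U₁ ρ) (Set.Ioi z) ∧
      U₁ z ^ m = ∫ ρ in Set.Ioi z, Kker d α b z ρ * U₁ ρ)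
    (hsol₂ : ∀ z, z₀ ≤ z →
      MeasureTheory.IntegrableOn (fun ρ => Kker d α b z ρ * U₂ ρ) (Set.Ioi z) ∧
      U₂ z ^ m = ∫ ρ in Set.Ioi z, Kker d α b z ρ * U₂ ρ)
    (hlam : ∃ lam : ℝ, 0 < lam ∧ ∀ z, z₀ ≤ z → lam * U₁ z ≤ U₂ z) :
    ∀ z, z₀ ≤ z → U₁ z ≤ U₂ z :=
  comparison_by_homogeneity_general d α m b hα hm hb z₀ hz₀ U₁ U₂ hpos₁ hpos₂ hsol₁ hsol₂ hlam
end
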